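/- The pseudo-rhombicuboctahedron is not vertex-transitive under its full symmetry group: it is not the case that for all u, v ∈ V' there exists A ∈ O(3) with A(V') = V' and A·u = v. (In particular, unlike the 13 Archimedean solids, it is not vertex-transitive, which is why it is excluded from Kepler's list.) -/

import Mathlib

/-! Every symmetry `A` is linear, so it commutes with the central inversion `x ↦ -x` and hence
maps antipodal pairs of vertices to antipodal pairs. The equatorial vertex `(1 + √2, 1, 1)` has
its antipode in `V'`, whereas the antipode `(-√2, 0, -(1 + √2))` of the top vertex
`(√2, 0, 1 + √2)` is not a vertex, because the bottom cupola was not rotated. So no symmetry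
maps the first vertex to the second. -/

noncomputable def base : Fin 3 → ℝ := ![1, 1, 1 + Real.sqrt 2]

/-- The vertex set of the rhombicuboctahedron with edge length 2 centered at the origin:
all points whose coordinates are, in some order, `±1, ±1, ±(1 + √2)`
(all coordinate permutations combined with all choices of signs). -/
def V : Set (EuclideanSpace ℝ (Fin 3)) :=
  {v | ∃ σ : Equiv.Perm (Fin 3), ∃ ε : Fin 3 → ℝ,
    (∀ i, ε i = 1 ∨ ε i = -1) ∧ ∀ i, v i = ε i * base (σ i)}

noncomputable def pt (a b c : ℝ) : EuclideanSpace ℝ (Fin 3) := WithLp.toLp 2 ![a, b, c]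

/-- The four top-cupola vertices `(±1, ±1, 1 + √2)` of the rhombicuboctahedron
that get replaced. -/
noncomputable def Vtop : Set (EuclideanSpace ℝ (Fin 3)) :=
  {pt 1 1 (1 + Real.sqrt 2), pt 1 (-1) (1 + Real.sqrt 2),
   pt (-1) 1 (1 + Real.sqrt 2), pt (-1) (-1) (1 + Real.sqrt 2)}

/-- The four new top vertices `(±√2, 0, 1 + √2)` and `(0, ±√2, 1 + √2)`
(the top square cupola rotated by 45° about the z-axis). -/
noncomputable def Vnew : Set (EuclideanSpace ℝ (Fin 3)) :=
  {pt (Real.sqrt 2) 0 (1 + Real.sqrt 2), pt (-Real.sqrt 2) 0 (1 + Real.sqrt 2),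
   pt 0 (Real.sqrt 2) (1 + Real.sqrt 2), pt 0 (-Real.sqrt 2) (1 + Real.sqrt 2)}

/-- The vertex set of the pseudo-rhombicuboctahedron (elongated square gyrobicupola)
with edge length 2. -/
noncomputable def V' : Set (EuclideanSpace ℝ (Fin 3)) := (V \ Vtop) ∪ Vnew

/-- The action of a 3×3 real matrix on ℝ³ (as `EuclideanSpace ℝ (Fin 3)`). -/
def act (A : Matrix (Fin 3) (Fin 3) ℝ) (v : EuclideanSpace ℝ (Fin 3)) :
    EuclideanSpace ℝ (Fin 3) := WithLp.toLp 2 (A.mulVec v)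

lemma act_neg (A : Matrix (Fin 3) (Fin 3) ℝ) (v : EuclideanSpace ℝ (Fin 3)) :
    act A (-v) = -act A v :=
  map_neg (Matrix.toLpLin 2 2 A) v

lemma neg_apply_mem_of_image_eq {α : Type*} [Neg α] {f : α → α} (hf : ∀ x, f (-x) = -f x)
    {S : Set α} (hS : f '' S = S) {u : α} (hu : -u ∈ S) : -f u ∈ S := by
  rw [← hf, ← hS]
  exact Set.mem_image_of_mem f hu

lemma neg_mem_V {v : EuclideanSpace ℝ (Fin 3)} (hv : v ∈ V) : -v ∈ V := by
  obtain ⟨σ, ε, hε, hv⟩ := hv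
  refine ⟨σ, -ε, fun i => (hε i).symm.imp (by simp [·]) (by simp [·]), fun i => ?_⟩
  simp [hv, neg_mul]

lemma abs_apply_of_mem_V {v : EuclideanSpace ℝ (Fin 3)} (hv : v ∈ V) (i : Fin 3) :
    |v i| = 1 ∨ |v i| = 1 + Real.sqrt 2 := by
  obtain ⟨σ, ε, hε, hv⟩ := hv
  have hε : |ε i| = 1 := by rcases hε i with h | h <;> simp [h]
  have hbase : ∀ j, base j = 1 ∨ base j = 1 + Real.sqrt 2 := by
    intro j; fin_cases j <;> simp [base]
  rw [hv, abs_mul, hε, one_mul]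
  rcases hbase (σ i) with h | h <;> rw [h]
  · simp
  · right; exact abs_of_pos (by positivity)

lemma apply_two_of_mem_Vtop {v : EuclideanSpace ℝ (Fin 3)} (hv : v ∈ Vtop) :
    v 2 = 1 + Real.sqrt 2 := by
  rcases hv with rfl | rfl | rfl | rfl <;> rfl

lemma apply_two_of_mem_Vnew {v : EuclideanSpace ℝ (Fin 3)} (hv : v ∈ Vnew) :
    v 2 = 1 + Real.sqrt 2 := by
  rcases hv with rfl | rfl | rfl | rfl <;> rfl

lemma mem_V'_of_mem_V {v : EuclideanSpace ℝ (Fin 3)} (hv : v ∈ V) (h2 : v 2 ≠ 1 + Real.sqrt 2) :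
    v ∈ V' :=
  Or.inl ⟨hv, fun htop => h2 (apply_two_of_mem_Vtop htop)⟩

lemma pt_mem_V : pt (1 + Real.sqrt 2) 1 1 ∈ V := by
  refine ⟨⟨![2, 0, 1], ![1, 2, 0], by decide, by decide⟩, 1, fun _ => Or.inl rfl, fun i => ?_⟩
  fin_cases i <;> simp [pt, base]

lemma neg_pt_not_mem_V' : -pt (Real.sqrt 2) 0 (1 + Real.sqrt 2) ∉ V' := by
  have hs : (0 : ℝ) < Real.sqrt 2 := by positivity
  rintro (⟨hV, -⟩ | hnew)
  · have h0 : |(-pt (Real.sqrt 2) 0 (1 + Real.sqrt 2)) 0| = Real.sqrt 2 := by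
      simp [pt, abs_of_pos hs]
    rcases abs_apply_of_mem_V hV 0 with h | h <;> rw [h0] at h
    · exact Real.one_lt_sqrt_two.ne' h
    · linarith
  · have h2 := apply_two_of_mem_Vnew hnew
    simp [pt] at h2
    linarith

/-- The pseudo-rhombicuboctahedron is not vertex-transitive under its full symmetry
group: it is not the case that for all `u, v ∈ V'` some `A ∈ O(3)` with `A(V') = V'`
satisfies `A·u = v`. -/
theorem pseudoRhombicuboctahedron_not_vertex_transitive :
    ¬ (∀ u ∈ V', ∀ v ∈ V', ∃ A : Matrix (Fin 3) (Fin 3) ℝ,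
      A ∈ Matrix.orthogonalGroup (Fin 3) ℝ ∧ act A '' V' = V' ∧ act A u = v) := by
  intro h
  have hs : (0 : ℝ) < Real.sqrt 2 := by positivity
  have hu : pt (1 + Real.sqrt 2) 1 1 ∈ V' :=
    mem_V'_of_mem_V pt_mem_V (by simp [pt])
  have hnegu : -pt (1 + Real.sqrt 2) 1 1 ∈ V' :=
    mem_V'_of_mem_V (neg_mem_V pt_mem_V) (by simp [pt]; linarith)
  have hv : pt (Real.sqrt 2) 0 (1 + Real.sqrt 2) ∈ V' := Or.inr (Or.inl rfl)
  obtain ⟨A, -, hA, hAu⟩ := h _ hu _ hv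
  exact neg_pt_not_mem_V' (hAu ▸ neg_apply_mem_of_image_eq (act_neg A) hA hnegu)
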